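/- Suppose rank(Σ_{l=1}^L B_l) = K. Then the K-th largest (in magnitude) eigenvalue of Ω_sum = Θ Z (Σ_{l=1}^L B_l) Z^T Θ satisfies |λ_K(Ω_sum)| ≥ θ_min² n_min |λ_K(Σ_{l=1}^L B_l)|. -/

import Mathlib

/-! Write `A = ΘZ`. Then `Ω_sum = A B Aᵀ` with `B = Σ_l B_l`, and `AᵀA = D` is diagonal with
`D_kk = Σ_{i ∈ community k} θ(i)² ≥ θ_min² n_min =: c`, so `‖Av‖ ≥ √c ‖v‖` for every `v`.
For `x = Aw` in the `K`-dimensional range of `A` this gives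
`‖Ω_sum x‖ ≥ √c ‖B Aᵀx‖ ≥ √c |λ_K(B)| ‖Dw‖ ≥ c |λ_K(B)| ‖x‖`.
A `K`-dimensional subspace on which `‖Mx‖ ≥ t ‖x‖` forces a symmetric `M` to have at least `K`
eigenvalues with `|λ| ≥ t`: otherwise the subspace meets the span of the eigenvectors with
`|λ| < t` nontrivially. -/

open Matrix MeasureTheory ProbabilityTheory
open scoped BigOperators ENNReal

noncomputable section

/-- Euclidean norm of a finite real vector. -/
def vecNorm {m : ℕ} (v : Fin m → ℝ) : ℝ := Real.sqrt (∑ i, v i ^ 2)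

/-- Frobenius norm of a real matrix. -/
def frobNorm {m p : ℕ} (M : Matrix (Fin m) (Fin p) ℝ) : ℝ :=
  Real.sqrt (∑ i, ∑ j, M i j ^ 2)

/-- Spectral norm (ℓ² operator norm) of a real matrix. -/
def specNorm {m p : ℕ} (M : Matrix (Fin m) (Fin p) ℝ) : ℝ :=
  sSup ((fun x => vecNorm (M.mulVec x)) '' {x : Fin p → ℝ | vecNorm x ≤ 1})

open Classical in
/-- The k-th largest (1-indexed) eigenvalue in magnitude of a real symmetric matrix
(`0` if the matrix is not Hermitian). -/
def kthAbsEig {m : ℕ} (M : Matrix (Fin m) (Fin m) ℝ) (k : ℕ) : ℝ :=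
  if hM : M.IsHermitian then
    (((Finset.univ : Finset (Fin m)).val.map fun i => |hM.eigenvalues i|).sort (· ≤ ·)).getD
      (m - k) 0
  else 0

/-- `Z` is a community membership matrix: 0/1 entries, exactly one 1 per row,
every column nonzero. -/
def IsMembership {n K : ℕ} (Z : Matrix (Fin n) (Fin K) ℝ) : Prop :=
  (∀ i k, Z i k = 0 ∨ Z i k = 1) ∧ (∀ i, ∑ k, Z i k = 1) ∧ (∀ k, ∃ i, Z i k = 1)

/-- The MLDCSBM model hypotheses on the parameters `Z`, `θ`, `B`. -/
def MLDCSBM {n L K : ℕ} (Z : Matrix (Fin n) (Fin K) ℝ) (θ : Fin n → ℝ)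
    (B : Fin L → Matrix (Fin K) (Fin K) ℝ) : Prop :=
  IsMembership Z ∧ (∀ i, 0 < θ i ∧ θ i ≤ 1) ∧
    (∀ l, (B l).IsSymm ∧ ∀ a b, 0 ≤ B l a b ∧ B l a b ≤ 1)

/-- Ω_l = Θ Z B_l Zᵀ Θ. -/
def OmegaL {n K : ℕ} (θ : Fin n → ℝ) (Z : Matrix (Fin n) (Fin K) ℝ)
    (Bl : Matrix (Fin K) (Fin K) ℝ) : Matrix (Fin n) (Fin n) ℝ :=
  Matrix.diagonal θ * Z * Bl * Zᵀ * Matrix.diagonal θ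

def thetaMin {n : ℕ} (θ : Fin n → ℝ) : ℝ := sInf (Set.range θ)
def thetaMax {n : ℕ} (θ : Fin n → ℝ) : ℝ := sSup (Set.range θ)

/-- Minimum community size. -/
def nMin {n K : ℕ} (Z : Matrix (Fin n) (Fin K) ℝ) : ℝ :=
  sInf (Set.range fun k : Fin K => ∑ i, Z i k)

/-- Maximum community size. -/
def nMax {n K : ℕ} (Z : Matrix (Fin n) (Fin K) ℝ) : ℝ :=
  sSup (Set.range fun k : Fin K => ∑ i, Z i k)

/-- Column `k` of a matrix, as a vector. -/
def colVec {n K : ℕ} (U : Matrix (Fin n) (Fin K) ℝ) (k : Fin K) : Fin n → ℝ := fun i => U i k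

/-- Row-normalized version of a matrix: each row divided by its Euclidean norm. -/
def rowNormalize {n K : ℕ} (U : Matrix (Fin n) (Fin K) ℝ) : Matrix (Fin n) (Fin K) ℝ :=
  fun i k => U i k / vecNorm (fun j => U i j)

/-- Diagonal degree matrix of a square matrix. -/
def degDiag {n : ℕ} (M : Matrix (Fin n) (Fin n) ℝ) : Matrix (Fin n) (Fin n) ℝ :=
  Matrix.diagonal fun i => ∑ j, M i j

lemma List.Pairwise.le_getElem_of_countP_lt_le {α : Type*} [LinearOrder α] {l : List α}
    (hl : l.Pairwise (· ≤ ·)) {t : α} {j : ℕ} (hj : j < l.length)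
    (hcount : l.countP (· < t) ≤ j) : t ≤ l[j] := by
  by_contra! hlt
  have htake : (l.take (j + 1)).countP (· < t) = j + 1 := by
    rw [List.countP_eq_length.mpr, List.length_take_of_le hj]
    intro x hx
    obtain ⟨i, hi, rfl⟩ := List.mem_take_iff_getElem.mp hx
    have hij : i ≤ j := by omega
    rcases hij.lt_or_eq with hij | rfl
    · exact decide_eq_true ((List.pairwise_iff_getElem.mp hl i j _ hj hij).trans_lt hlt)
    · exact decide_eq_true hlt
  have := (List.take_sublist (j + 1) l).countP_le (p := (· < t))
  omega

lemma List.Pairwise.getElem_zero_le {α : Type*} [Preorder α] {l : List α}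
    (hl : l.Pairwise (· ≤ ·)) {x : α} (hx : x ∈ l) : l[0]'(List.length_pos_of_mem hx) ≤ x := by
  obtain ⟨j, hj, rfl⟩ := List.getElem_of_mem hx
  rcases Nat.eq_zero_or_pos j with rfl | hj0
  · exact le_rfl
  · exact List.pairwise_iff_getElem.mp hl 0 j _ hj hj0

open scoped Finset

namespace Matrix.IsHermitian

variable {n : Type*} [Fintype n] [DecidableEq n] {M : Matrix n n ℝ} (hM : M.IsHermitian)

lemma sum_sq_eigenvectorBasis_dotProduct (x : n → ℝ) :
    ∑ i, (⇑(hM.eigenvectorBasis i) ⬝ᵥ x) ^ 2 = x ⬝ᵥ x := by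
  have h := hM.eigenvectorBasis.sum_sq_inner_right (WithLp.toLp 2 x)
  rw [EuclideanSpace.norm_eq, Real.sq_sqrt (by positivity)] at h
  simpa [real_inner_eq_re_inner, PiLp.inner_apply, dotProduct, mul_comm, sq] using h

lemma eigenvectorBasis_dotProduct_mulVec (x : n → ℝ) (i : n) :
    ⇑(hM.eigenvectorBasis i) ⬝ᵥ (M *ᵥ x) = hM.eigenvalues i * (⇑(hM.eigenvectorBasis i) ⬝ᵥ x) := by
  rw [dotProduct_mulVec, ← mulVec_transpose, ← conjTranspose_eq_transpose_of_trivial, hM,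
    mulVec_eigenvectorBasis, smul_dotProduct, smul_eq_mul]

lemma sum_sq_eigenvalues_mul_dotProduct (x : n → ℝ) :
    ∑ i, (hM.eigenvalues i * (⇑(hM.eigenvectorBasis i) ⬝ᵥ x)) ^ 2 = (M *ᵥ x) ⬝ᵥ (M *ᵥ x) := by
  simp only [← hM.eigenvectorBasis_dotProduct_mulVec, hM.sum_sq_eigenvectorBasis_dotProduct]

lemma sq_mul_dotProduct_self_le {μ : ℝ} (hμ : 0 ≤ μ) (hμM : ∀ i, μ ≤ |hM.eigenvalues i|)
    (x : n → ℝ) : μ ^ 2 * (x ⬝ᵥ x) ≤ (M *ᵥ x) ⬝ᵥ (M *ᵥ x) := by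
  rw [← hM.sum_sq_eigenvectorBasis_dotProduct, ← hM.sum_sq_eigenvalues_mul_dotProduct,
    Finset.mul_sum]
  gcongr with i
  rw [mul_pow, ← sq_abs (hM.eigenvalues i)]
  gcongr
  exact hμM i

lemma finrank_le_card_filter_le_abs_eigenvalues {V : Submodule ℝ (n → ℝ)} {t : ℝ}
    (hV : ∀ x ∈ V, t ^ 2 * (x ⬝ᵥ x) ≤ (M *ᵥ x) ⬝ᵥ (M *ᵥ x)) :
    Module.finrank ℝ V ≤ #{i | t ≤ |hM.eigenvalues i|} := by
  set F : Finset n := {i | t ≤ |hM.eigenvalues i|}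
  by_contra! hF
  let coeffs : V →ₗ[ℝ] (F → ℝ) :=
    { toFun := fun x i => ⇑(hM.eigenvectorBasis i) ⬝ᵥ (x : n → ℝ)
      map_add' := fun x y => by ext i; simp [dotProduct_add]
      map_smul' := fun r x => by ext i; simp }
  obtain ⟨⟨x, hxV⟩, hx, hx0⟩ := Submodule.ne_bot_iff _ |>.mp <|
    LinearMap.ker_ne_bot_of_finrank_lt (f := coeffs) (by simpa using hF)
  set c : n → ℝ := fun i => ⇑(hM.eigenvectorBasis i) ⬝ᵥ x
  have hcF : ∀ i ∈ F, c i = 0 := fun i hi => congrFun (LinearMap.mem_ker.mp hx) ⟨i, hi⟩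
  have hxx : ∑ i, c i ^ 2 ≠ 0 := by
    rw [hM.sum_sq_eigenvectorBasis_dotProduct]
    simpa using hx0
  obtain ⟨i₀, -, hi₀⟩ := Finset.exists_ne_zero_of_sum_ne_zero hxx
  have heig : ∀ i, c i ≠ 0 → hM.eigenvalues i ^ 2 < t ^ 2 := fun i hi => by
    have : |hM.eigenvalues i| < t := not_le.mp fun h => hi (hcF i (by simpa [F] using h))
    exact sq_lt_sq.mpr (this.trans_le (le_abs_self t))
  have hlt : (M *ᵥ x) ⬝ᵥ (M *ᵥ x) < t ^ 2 * (x ⬝ᵥ x) := by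
    rw [← hM.sum_sq_eigenvalues_mul_dotProduct, ← hM.sum_sq_eigenvectorBasis_dotProduct,
      Finset.mul_sum]
    refine Finset.sum_lt_sum (fun i _ => ?_) ⟨i₀, Finset.mem_univ _, ?_⟩
    · change (_ * c i) ^ 2 ≤ t ^ 2 * c i ^ 2
      by_cases hi : c i = 0
      · simp [hi]
      · rw [mul_pow]
        exact mul_le_mul_of_nonneg_right (heig i hi).le (sq_nonneg _)
    · change (_ * c i₀) ^ 2 < t ^ 2 * c i₀ ^ 2
      rw [mul_pow]
      exact mul_lt_mul_of_pos_right (heig i₀ (by rintro h; simp [h] at hi₀))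
        (lt_of_le_of_ne (sq_nonneg _) hi₀.symm)
  exact (hV x hxV).not_gt hlt

end Matrix.IsHermitian

namespace Matrix.IsHermitian

variable {m : ℕ} {M : Matrix (Fin m) (Fin m) ℝ} (hM : M.IsHermitian)

def sortedAbsEigenvalues : List ℝ := (Finset.univ.val.map fun i => |hM.eigenvalues i|).sort (· ≤ ·)

lemma kthAbsEig_eq (k : ℕ) : kthAbsEig M k = hM.sortedAbsEigenvalues.getD (m - k) 0 := by
  rw [kthAbsEig, dif_pos hM, sortedAbsEigenvalues]

lemma pairwise_sortedAbsEigenvalues : hM.sortedAbsEigenvalues.Pairwise (· ≤ ·) :=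
  Multiset.pairwise_sort _ _

lemma length_sortedAbsEigenvalues : hM.sortedAbsEigenvalues.length = m := by
  simp [sortedAbsEigenvalues]

lemma mem_sortedAbsEigenvalues {x : ℝ} :
    x ∈ hM.sortedAbsEigenvalues ↔ ∃ i, |hM.eigenvalues i| = x := by
  simp [sortedAbsEigenvalues]

lemma countP_lt_sortedAbsEigenvalues (t : ℝ) :
    hM.sortedAbsEigenvalues.countP (· < t) = #{i | |hM.eigenvalues i| < t} := by
  rw [← Multiset.coe_countP, sortedAbsEigenvalues, Multiset.sort_eq, Multiset.countP_map]
  rfl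

lemma kthAbsEig_self_le_abs_eigenvalues (i : Fin m) : kthAbsEig M m ≤ |hM.eigenvalues i| := by
  have hi := hM.mem_sortedAbsEigenvalues.mpr ⟨i, rfl⟩
  rw [hM.kthAbsEig_eq, Nat.sub_self, List.getD_eq_getElem _ _ (List.length_pos_of_mem hi)]
  exact hM.pairwise_sortedAbsEigenvalues.getElem_zero_le hi

lemma le_kthAbsEig_of_le_card {k : ℕ} {t : ℝ} (hk : 0 < k)
    (hcard : k ≤ #{i | t ≤ |hM.eigenvalues i|}) : t ≤ kthAbsEig M k := by
  have hsplit := Finset.card_filter_add_card_filter_not (s := Finset.univ)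
    (p := fun i : Fin m => |hM.eigenvalues i| < t)
  simp only [not_lt, Finset.card_univ, Fintype.card_fin] at hsplit
  have hlen := hM.length_sortedAbsEigenvalues
  rw [hM.kthAbsEig_eq, List.getD_eq_getElem _ _ (by omega)]
  refine hM.pairwise_sortedAbsEigenvalues.le_getElem_of_countP_lt_le _ ?_
  rw [countP_lt_sortedAbsEigenvalues]
  omega

end Matrix.IsHermitian

lemma kthAbsEig_nonneg {m : ℕ} (M : Matrix (Fin m) (Fin m) ℝ) (k : ℕ) : 0 ≤ kthAbsEig M k := by
  by_cases hM : M.IsHermitian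
  · rw [hM.kthAbsEig_eq]
    rcases lt_or_ge (m - k) hM.sortedAbsEigenvalues.length with h | h
    · obtain ⟨i, hi⟩ := hM.mem_sortedAbsEigenvalues.mp (List.getElem_mem h)
      rw [List.getD_eq_getElem _ _ h, ← hi]
      exact abs_nonneg _
    · rw [List.getD_eq_default _ _ h]
  · rw [kthAbsEig, dif_neg hM]

section GramDiagonal

variable {ι κ : Type*} [Fintype ι] [Fintype κ] [DecidableEq κ] {A : Matrix ι κ ℝ} {d : κ → ℝ}
  {c : ℝ}

lemma dotProduct_mulVec_self_of_transpose_mul_eq_diagonal (hA : Aᵀ * A = diagonal d)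
    (v : κ → ℝ) : (A *ᵥ v) ⬝ᵥ (A *ᵥ v) = ∑ k, d k * v k ^ 2 := by
  rw [dotProduct_mulVec, ← mulVec_transpose, mulVec_mulVec, hA]
  simp only [dotProduct, mulVec_diagonal]
  exact Finset.sum_congr rfl fun k _ => by ring

lemma mul_dotProduct_self_le_of_transpose_mul_eq_diagonal (hA : Aᵀ * A = diagonal d)
    (hcd : ∀ k, c ≤ d k) (v : κ → ℝ) : c * (v ⬝ᵥ v) ≤ (A *ᵥ v) ⬝ᵥ (A *ᵥ v) := by
  rw [dotProduct_mulVec_self_of_transpose_mul_eq_diagonal hA, dotProduct, Finset.mul_sum]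
  refine Finset.sum_le_sum fun k _ => ?_
  rw [← sq]
  exact mul_le_mul_of_nonneg_right (hcd k) (sq_nonneg _)

lemma mul_dotProduct_self_le_transpose_mulVec (hA : Aᵀ * A = diagonal d) (hc : 0 ≤ c)
    (hcd : ∀ k, c ≤ d k) (v : κ → ℝ) :
    c * ((A *ᵥ v) ⬝ᵥ (A *ᵥ v)) ≤ (Aᵀ *ᵥ (A *ᵥ v)) ⬝ᵥ (Aᵀ *ᵥ (A *ᵥ v)) := by
  rw [dotProduct_mulVec_self_of_transpose_mul_eq_diagonal hA, mulVec_mulVec, hA]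
  simp only [dotProduct, mulVec_diagonal, Finset.mul_sum]
  refine Finset.sum_le_sum fun k _ => ?_
  have hdk : 0 ≤ d k * v k ^ 2 := mul_nonneg (hc.trans (hcd k)) (sq_nonneg _)
  calc c * (d k * v k ^ 2) ≤ d k * (d k * v k ^ 2) := mul_le_mul_of_nonneg_right (hcd k) hdk
    _ = d k * v k * (d k * v k) := by ring

lemma sq_mul_dotProduct_self_le_mul_mul_transpose_mulVec (hA : Aᵀ * A = diagonal d)
    (hc : 0 ≤ c) (hcd : ∀ k, c ≤ d k) {B : Matrix κ κ ℝ} (hB : B.IsHermitian) {μ : ℝ}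
    (hμ : 0 ≤ μ) (hμB : ∀ k, μ ≤ |hB.eigenvalues k|) (v : κ → ℝ) :
    (c * μ) ^ 2 * ((A *ᵥ v) ⬝ᵥ (A *ᵥ v)) ≤
      ((A * B * Aᵀ) *ᵥ (A *ᵥ v)) ⬝ᵥ ((A * B * Aᵀ) *ᵥ (A *ᵥ v)) := by
  set y := Aᵀ *ᵥ (A *ᵥ v)
  calc (c * μ) ^ 2 * ((A *ᵥ v) ⬝ᵥ (A *ᵥ v)) = c * (μ ^ 2 * (c * ((A *ᵥ v) ⬝ᵥ (A *ᵥ v)))) := by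
        ring
    _ ≤ c * (μ ^ 2 * (y ⬝ᵥ y)) := by
        gcongr; exact mul_dotProduct_self_le_transpose_mulVec hA hc hcd v
    _ ≤ c * ((B *ᵥ y) ⬝ᵥ (B *ᵥ y)) := by
        gcongr; exact hB.sq_mul_dotProduct_self_le hμ hμB y
    _ ≤ (A *ᵥ (B *ᵥ y)) ⬝ᵥ (A *ᵥ (B *ᵥ y)) :=
        mul_dotProduct_self_le_of_transpose_mul_eq_diagonal hA hcd _
    _ = _ := by simp only [y, mulVec_mulVec, Matrix.mul_assoc]

end GramDiagonal

theorem le_kthAbsEig_mul_mul_transpose {m K : ℕ} {A : Matrix (Fin m) (Fin K) ℝ} {d : Fin K → ℝ}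
    (hA : Aᵀ * A = diagonal d) {c : ℝ} (hc : 0 ≤ c) (hcd : ∀ k, c ≤ d k)
    {B : Matrix (Fin K) (Fin K) ℝ} (hB : B.IsHermitian) :
    c * kthAbsEig B K ≤ kthAbsEig (A * B * Aᵀ) K := by
  rcases hc.eq_or_lt with rfl | hc_pos
  · simpa using kthAbsEig_nonneg _ _
  rcases Nat.eq_zero_or_pos K with rfl | hK
  · simp [kthAbsEig]
  have hΩ : (A * B * Aᵀ).IsHermitian := by
    simpa [conjTranspose_eq_transpose_of_trivial] using isHermitian_mul_mul_conjTranspose A hB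
  have hinj : Function.Injective (mulVecLin A) := by
    rw [← LinearMap.ker_eq_bot, LinearMap.ker_eq_bot']
    intro v hv
    have hvv := mul_dotProduct_self_le_of_transpose_mul_eq_diagonal hA hcd v
    rw [show A *ᵥ v = 0 from hv, dotProduct_zero] at hvv
    exact dotProduct_self_eq_zero.mp <| le_antisymm (nonpos_of_mul_nonpos_right hvv hc_pos)
      (Finset.sum_nonneg fun i _ => mul_self_nonneg (v i))
  refine hΩ.le_kthAbsEig_of_le_card hK ?_
  calc K = Module.finrank ℝ (LinearMap.range (mulVecLin A)) := by
        rw [LinearMap.finrank_range_of_inj hinj, Module.finrank_fin_fun]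
    _ ≤ _ := hΩ.finrank_le_card_filter_le_abs_eigenvalues <| by
        rintro _ ⟨v, rfl⟩
        exact sq_mul_dotProduct_self_le_mul_mul_transpose_mulVec hA hc hcd hB
          (kthAbsEig_nonneg B K) hB.kthAbsEig_self_le_abs_eigenvalues v

namespace IsMembership

variable {n K : ℕ} {Z : Matrix (Fin n) (Fin K) ℝ}

lemma nonneg (hZ : IsMembership Z) (i : Fin n) (k : Fin K) : 0 ≤ Z i k := by
  rcases hZ.1 i k with h | h <;> simp [h]

lemma mul_apply_eq (hZ : IsMembership Z) (i : Fin n) (k k' : Fin K) :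
    Z i k * Z i k' = if k = k' then Z i k else 0 := by
  split_ifs with hkk'
  · subst hkk'
    rcases hZ.1 i k with h | h <;> simp [h]
  · rcases hZ.1 i k with h | h
    · simp [h]
    rcases hZ.1 i k' with h' | h'
    · simp [h']
    have hpair : Z i k + Z i k' ≤ ∑ a, Z i a := by
      rw [← Finset.sum_pair hkk']
      exact Finset.sum_le_sum_of_subset_of_nonneg (Finset.subset_univ _)
        fun a _ _ => hZ.nonneg i a
    rw [hZ.2.1 i, h, h'] at hpair
    norm_num at hpair

lemma transpose_mul_self_diagonal_mul (hZ : IsMembership Z) (θ : Fin n → ℝ) :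
    (diagonal θ * Z)ᵀ * (diagonal θ * Z) = diagonal fun k => ∑ i, θ i ^ 2 * Z i k := by
  ext k k'
  rw [mul_apply, diagonal_apply]
  simp_rw [transpose_apply, diagonal_mul,
    show ∀ i, θ i * Z i k * (θ i * Z i k') = θ i ^ 2 * (Z i k * Z i k') from fun i => by ring,
    hZ.mul_apply_eq]
  split_ifs <;> simp

lemma nMin_nonneg (hZ : IsMembership Z) : 0 ≤ nMin Z :=
  Real.sInf_nonneg <| by
    rintro _ ⟨k, rfl⟩
    exact Finset.sum_nonneg fun i _ => hZ.nonneg i k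

lemma thetaMin_sq_mul_nMin_le (hZ : IsMembership Z) {θ : Fin n → ℝ} (hθ : ∀ i, 0 ≤ θ i)
    (k : Fin K) : thetaMin θ ^ 2 * nMin Z ≤ ∑ i, θ i ^ 2 * Z i k := by
  have hθmin : ∀ i, thetaMin θ ≤ θ i := fun i =>
    csInf_le (Set.finite_range θ).bddBelow ⟨i, rfl⟩
  have hθmin_nonneg : 0 ≤ thetaMin θ := Real.sInf_nonneg (by rintro _ ⟨i, rfl⟩; exact hθ i)
  have hnMin : nMin Z ≤ ∑ i, Z i k :=
    csInf_le (Set.finite_range _).bddBelow ⟨k, rfl⟩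
  calc thetaMin θ ^ 2 * nMin Z ≤ thetaMin θ ^ 2 * ∑ i, Z i k := by gcongr
    _ = ∑ i, thetaMin θ ^ 2 * Z i k := Finset.mul_sum _ _ _
    _ ≤ ∑ i, θ i ^ 2 * Z i k := by
        gcongr with i
        · exact hZ.nonneg i k
        · exact hθmin i

end IsMembership

lemma sum_OmegaL {n L K : ℕ} (θ : Fin n → ℝ) (Z : Matrix (Fin n) (Fin K) ℝ)
    (B : Fin L → Matrix (Fin K) (Fin K) ℝ) :
    ∑ l, OmegaL θ Z (B l) = diagonal θ * Z * (∑ l, B l) * (diagonal θ * Z)ᵀ := by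
  simp only [OmegaL, transpose_mul, diagonal_transpose, Matrix.mul_sum, Matrix.sum_mul,
    Matrix.mul_assoc]

theorem stmt9_general {n L K : ℕ}
    (Z : Matrix (Fin n) (Fin K) ℝ) (θ : Fin n → ℝ)
    (B : Fin L → Matrix (Fin K) (Fin K) ℝ)
    (hmodel : MLDCSBM Z θ B) :
    thetaMin θ ^ 2 * nMin Z * kthAbsEig (∑ l, B l) K ≤
      kthAbsEig (∑ l, OmegaL θ Z (B l)) K := by
  obtain ⟨hZ, hθ, hB⟩ := hmodel
  have hBsum : (∑ l, B l).IsHermitian := by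
    rw [IsHermitian, conjTranspose_eq_transpose_of_trivial, transpose_sum]
    exact Finset.sum_congr rfl fun l _ => (hB l).1
  rw [sum_OmegaL]
  exact le_kthAbsEig_mul_mul_transpose (hZ.transpose_mul_self_diagonal_mul θ)
    (mul_nonneg (sq_nonneg _) hZ.nMin_nonneg) (hZ.thetaMin_sq_mul_nMin_le fun i => (hθ i).1.le)
    hBsum

theorem stmt9 {n L K : ℕ} (hn : 0 < n) (hL : 0 < L) (hK : 0 < K) (hKn : K ≤ n)
    (Z : Matrix (Fin n) (Fin K) ℝ) (θ : Fin n → ℝ)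
    (B : Fin L → Matrix (Fin K) (Fin K) ℝ)
    (hmodel : MLDCSBM Z θ B)
    (hrank : (∑ l, B l).rank = K) :
    thetaMin θ ^ 2 * nMin Z * kthAbsEig (∑ l, B l) K ≤
      kthAbsEig (∑ l, OmegaL θ Z (B l)) K :=
  stmt9_general Z θ B hmodel

end
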